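/- Let q be a power of 2 and let α ∈ F_{q⁴} generate F_{q⁴} over F_q. Then the unique involution Γ ∈ PGL₂(F_q) swapping α with α^{q²} and α^q with α^{q³} exists, and every involution in PGL₂(F_q) for q even is conjugate to the class of the matrix [[1,1],[0,1]]. -/

import Mathlib

open Matrix
open scoped LinearAlgebra.Projectivization

/-- The Möbius action of `GL(2,K)` on the projective line `ℙ K (Fin 2 → K)`.
Since scalar matrices act trivially, this realizes the action of `PGL₂(K)`. -/
noncomputable def mobius {K : Type*} [Field K] (M : GL (Fin 2) K)
    (p : ℙ K (Fin 2 → K)) : ℙ K (Fin 2 → K) :=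
  Projectivization.map
    (LinearMap.GeneralLinearGroup.toLinearEquiv
      (Matrix.GeneralLinearGroup.toLin M)).toLinearMap
    (LinearEquiv.injective _) p

/-- The point `[x : 1]` of the projective line. -/
noncomputable def pt {K : Type*} [Field K] (x : K) : ℙ K (Fin 2 → K) :=
  Projectivization.mk K ![x, 1] (by
    intro h
    simpa using congrFun h 1)

/-- `M ∈ GL₂(F)` represents a scalar (identity) element of `PGL₂(F)`. -/
def IsScalarMat {F : Type*} [Field F] (M : GL (Fin 2) F) : Prop :=
  ∃ c : F, (M : Matrix (Fin 2) (Fin 2) F) = c • (1 : Matrix (Fin 2) (Fin 2) F)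

/-!
Put `β = α ^ q ^ 2`. Both `α + β` and `α β` are fixed by `x ↦ x ^ q ^ 2`, whose fixed points form
an `F`-subspace of dimension at most two, so `u + v (α + β) + w α β = 0` for some `(u, v, w) ≠ 0`.
In characteristic two the matrix `[[v, u], [w, v]]` then swaps `α` and `β`, and, applying Frobenius
to the relation, `α ^ q` and `α ^ q ^ 3`; having trace zero, it squares to a scalar. It is unique
because a Möbius transformation is determined by the images of three points.

If `M` is a non-scalar involution with `M * M = e ^ 2`, then `N = M + e` is a nonzero matrix with
`N * N = 0`; in the basis `(N v, e v)` for any `v ∉ ker N`, `M` becomes `e • [[1, 1], [0, 1]]`.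
-/

section ScalarMatrices

variable {F : Type*} [Field F]

lemma isScalarMat_iff {M : GL (Fin 2) F} :
    IsScalarMat M ↔ M 0 1 = 0 ∧ M 1 0 = 0 ∧ M 0 0 = M 1 1 := by
  constructor
  · rintro ⟨c, hc⟩
    simp [hc]
  · rintro ⟨h01, h10, h00⟩
    refine ⟨M 0 0, ?_⟩
    rw [eta_fin_two (M : Matrix (Fin 2) (Fin 2) F), h01, h10, ← h00]
    ext i j; fin_cases i <;> fin_cases j <;> simp

lemma IsScalarMat.map {K : Type*} [Field K] (f : F →+* K) {M : GL (Fin 2) F}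
    (hM : IsScalarMat M) : IsScalarMat (GeneralLinearGroup.map f M) := by
  simp only [isScalarMat_iff, GeneralLinearGroup.map_apply] at hM ⊢
  exact ⟨by simp [hM.1], by simp [hM.2.1], by rw [hM.2.2]⟩

/-- In characteristic two `M 0 0 = M 1 1` says `trace M = 0`, i.e. `M * M = det M` by
Cayley–Hamilton. -/
lemma isScalarMat_mul_self_iff_of_char_two [CharP F 2] {M : GL (Fin 2) F} :
    IsScalarMat (M * M) ↔ M 0 0 = M 1 1 := by
  have h2 := CharTwo.two_eq_zero (R := F)
  simp only [isScalarMat_iff, Units.val_mul, mul_apply, Fin.sum_univ_two]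
  constructor
  · rintro ⟨-, -, h⟩
    have : (M 0 0 + M 1 1) * (M 0 0 + M 1 1) = 0 := by
      linear_combination h + (M 0 0 * M 1 1 + M 1 1 * M 1 1) * h2
    exact CharTwo.add_eq_zero.1 (mul_self_eq_zero.1 this)
  · intro hM
    rw [hM]
    exact ⟨by linear_combination M 1 1 * M 0 1 * h2, by linear_combination M 1 1 * M 1 0 * h2,
      by ring⟩

end ScalarMatrices

section ProjectiveLine

variable {K : Type*} [Field K]

lemma mobius_mk (A : GL (Fin 2) K) (v : Fin 2 → K) (hv : v ≠ 0) :
    mobius A (Projectivization.mk K v hv) =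
      Projectivization.mk K ((A : Matrix (Fin 2) (Fin 2) K) *ᵥ v)
        (((mulVec_injective_of_isUnit A.isUnit).ne_iff' (mulVec_zero _)).2 hv) :=
  Projectivization.map_mk _ _ v hv

lemma mobius_mul (A B : GL (Fin 2) K) (p : ℙ K (Fin 2 → K)) :
    mobius (A * B) p = mobius A (mobius B p) := by
  induction p using Projectivization.ind with
  | h v hv => simp only [mobius_mk, Units.val_mul, mulVec_mulVec]

lemma mobius_of_isScalarMat {A : GL (Fin 2) K} (hA : IsScalarMat A) (p : ℙ K (Fin 2 → K)) :
    mobius A p = p := by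
  obtain ⟨c, hc⟩ := hA
  induction p using Projectivization.ind with
  | h v hv =>
    rw [mobius_mk, Projectivization.mk_eq_mk_iff']
    exact ⟨c, by rw [hc, smul_mulVec, one_mulVec]⟩

lemma mobius_one (p : ℙ K (Fin 2 → K)) : mobius 1 p = p :=
  mobius_of_isScalarMat ⟨1, by simp⟩ p

lemma mulVec_vec_one (A : Matrix (Fin 2) (Fin 2) K) (x : K) :
    A *ᵥ ![x, 1] = ![A 0 0 * x + A 0 1, A 1 0 * x + A 1 1] := by
  ext i; fin_cases i <;> simp [mulVec, dotProduct, Fin.sum_univ_two]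

lemma mobius_pt_eq_pt_iff {A : GL (Fin 2) K} {x y : K} :
    mobius A (pt x) = pt y ↔ A 0 0 * x + A 0 1 = y * (A 1 0 * x + A 1 1) := by
  rw [pt, mobius_mk, pt, Projectivization.mk_eq_mk_iff', mulVec_vec_one]
  constructor
  · rintro ⟨a, ha⟩
    have h0 := congrFun ha 0
    have h1 := congrFun ha 1
    simp only [Fin.isValue, Pi.smul_apply, cons_val_zero, cons_val_one, smul_eq_mul,
      mul_one] at h0 h1
    rw [← h0, ← h1, mul_comm]
  · intro h
    refine ⟨A 1 0 * x + A 1 1, ?_⟩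
    rw [h]
    ext i; fin_cases i <;> simp [mul_comm]

lemma mobius_pt_eq_pt_iff_of_char_two [CharP K 2] {A : GL (Fin 2) K} (hA : A 0 0 = A 1 1)
    {x y : K} : mobius A (pt x) = pt y ↔ A 0 1 + A 0 0 * (x + y) + A 1 0 * (x * y) = 0 := by
  rw [mobius_pt_eq_pt_iff, ← sub_eq_zero, hA]
  have h2 := CharTwo.two_eq_zero (R := K)
  constructor <;> intro h
  · linear_combination h + (A 1 1 * y + A 1 0 * x * y) * h2
  · linear_combination h - (A 1 1 * y + A 1 0 * x * y) * h2

/-- Three distinct fixed points are roots of `c x² + (d - a) x - b`, which therefore vanishes. -/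
lemma isScalarMat_of_fixes_three {A : GL (Fin 2) K} {x y z : K} (hxy : x ≠ y) (hyz : y ≠ z)
    (hxz : x ≠ z) (hx : mobius A (pt x) = pt x) (hy : mobius A (pt y) = pt y)
    (hz : mobius A (pt z) = pt z) : IsScalarMat A := by
  have ex := mobius_pt_eq_pt_iff.1 hx
  have ey := mobius_pt_eq_pt_iff.1 hy
  have ez := mobius_pt_eq_pt_iff.1 hz
  have hxy' : A 1 0 * (x + y) = A 0 0 - A 1 1 := by
    apply mul_left_cancel₀ (sub_ne_zero.2 hxy)
    linear_combination ey - ex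
  have hyz' : A 1 0 * (y + z) = A 0 0 - A 1 1 := by
    apply mul_left_cancel₀ (sub_ne_zero.2 hyz)
    linear_combination ez - ey
  have h10 : A 1 0 = 0 := by
    apply (mul_eq_zero.1 _).resolve_right (sub_ne_zero.2 hxz)
    linear_combination hxy' - hyz'
  have h11 : A 1 1 = A 0 0 := by linear_combination hxy' - (x + y) * h10
  have h01 : A 0 1 = 0 := by linear_combination ex + x * x * h10 + x * h11
  exact isScalarMat_iff.2 ⟨h01, h10, h11.symm⟩

lemma mobius_eq_of_agree_on_three {A B : GL (Fin 2) K} {x y z : K} (hxy : x ≠ y) (hyz : y ≠ z)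
    (hxz : x ≠ z) (hx : mobius A (pt x) = mobius B (pt x))
    (hy : mobius A (pt y) = mobius B (pt y)) (hz : mobius A (pt z) = mobius B (pt z))
    (p : ℙ K (Fin 2 → K)) : mobius A p = mobius B p := by
  have hfix : ∀ w, mobius A (pt w) = mobius B (pt w) → mobius (B⁻¹ * A) (pt w) = pt w := by
    intro w hw
    rw [mobius_mul, hw, ← mobius_mul, inv_mul_cancel, mobius_one]
  rw [← mul_inv_cancel_left B A, mobius_mul B,
    mobius_of_isScalarMat (isScalarMat_of_fixes_three hxy hyz hxz (hfix x hx) (hfix y hy)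
      (hfix z hz))]

end ProjectiveLine

section Swap

variable {F K : Type*} [Field F] [Field K] [Algebra F K]

lemma algebraMap_mul_add_algebraMap_ne_zero {x : K} (hx : x ∉ Set.range (algebraMap F K))
    {w v : F} (hwv : (w, v) ≠ 0) : algebraMap F K w * x + algebraMap F K v ≠ 0 := by
  intro h
  by_cases hw : w = 0
  · exact hwv (by simpa [hw] using h)
  · refine hx ⟨-v / w, ?_⟩
    have : algebraMap F K w ≠ 0 := by simpa using hw
    rw [map_div₀, map_neg]
    field_simp
    linear_combination -h

/-- The witness is `[[v, u], [w, v]]`, whose determinant is `(w x + v) (w y + v)` modulo the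
relation. -/
lemma exists_swap_of_relation [CharP F 2] {x y : K} (hx : x ∉ Set.range (algebraMap F K))
    (hy : y ∉ Set.range (algebraMap F K)) (hxy : x ≠ y) {u v w : F} (huvw : (u, v, w) ≠ 0)
    (hrel : algebraMap F K u + algebraMap F K v * (x + y) + algebraMap F K w * (x * y) = 0) :
    ∃ M : GL (Fin 2) F, M 0 0 = M 1 1 ∧ ¬ IsScalarMat M ∧ ∀ x' y' : K,
      mobius (GeneralLinearGroup.map (algebraMap F K) M) (pt x') = pt y' ↔
        algebraMap F K u + algebraMap F K v * (x' + y') + algebraMap F K w * (x' * y') = 0 := by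
  have := charP_of_injective_algebraMap (algebraMap F K).injective 2
  set φ := algebraMap F K
  have hwv : (w, v) ≠ 0 := by
    intro h
    obtain ⟨hw, hv⟩ := Prod.mk_eq_zero.1 h
    exact huvw (by simpa [φ, hw, hv] using hrel)
  have hdet : (!![v, u; w, v] : Matrix (Fin 2) (Fin 2) F).det ≠ 0 := by
    have hfac : φ (!![v, u; w, v] : Matrix (Fin 2) (Fin 2) F).det =
        (φ w * x + φ v) * (φ w * y + φ v) := by
      rw [det_fin_two_of, map_sub, map_mul, map_mul]
      linear_combination -φ w * hrel
    intro h0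
    rw [h0, map_zero, eq_comm, mul_eq_zero] at hfac
    exact hfac.elim (algebraMap_mul_add_algebraMap_ne_zero hx hwv)
      (algebraMap_mul_add_algebraMap_ne_zero hy hwv)
  set M := GeneralLinearGroup.mkOfDetNeZero _ hdet
  have hM : (M : Matrix (Fin 2) (Fin 2) F) = !![v, u; w, v] := rfl
  refine ⟨M, by simp [hM], ?_, fun x' y' => ?_⟩
  · rw [isScalarMat_iff, hM]
    rintro ⟨hu, hw, -⟩
    simp only [of_apply, cons_val', cons_val_zero, cons_val_one, empty_val', cons_val_fin_one,
      Fin.isValue] at hu hw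
    have hv : φ v * (x + y) = 0 := by simpa [φ, hu, hw] using hrel
    have hxy' : x + y ≠ 0 := fun h => hxy (by simpa using CharTwo.add_eq_zero.1 h)
    exact huvw (by simpa [hu, hw, hxy'] using hv)
  · rw [mobius_pt_eq_pt_iff_of_char_two (by simp [GeneralLinearGroup.map_apply, hM])]
    simp [GeneralLinearGroup.map_apply, hM, φ]

end Swap

open Polynomial in
lemma Finset.card_le_of_forall_pow_eq_self {K : Type*} [Field K] {n : ℕ} (hn : 1 < n)
    (s : Finset K) (h : ∀ x ∈ s, x ^ n = x) : s.card ≤ n := by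
  have hdeg : (X ^ n - X : K[X]).natDegree = n := by
    rw [natDegree_sub_eq_left_of_natDegree_lt] <;> simp [hn]
  have hne : (X ^ n - X : K[X]) ≠ 0 := fun h0 => by simp [h0] at hdeg; omega
  rw [← hdeg]
  refine card_le_degree_of_subset_roots fun x hx => ?_
  simp [mem_roots hne, h x hx]

section FiniteField

variable {F K : Type*} [Field F] [Fintype F] [Field K] [Algebra F K]

local notation "q" => Fintype.card F

lemma frobeniusAlgHom_pow_apply (n : ℕ) (x : K) :
    (FiniteField.frobeniusAlgHom F K ^ n) x = x ^ q ^ n := by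
  rw [AlgHom.coe_pow, FiniteField.coe_frobeniusAlgHom, pow_iterate]

lemma Submodule.card_pow_finrank_le_of_forall_pow_eq_self (W : Submodule F K)
    [Module.Finite F W] {n : ℕ} (hn : 1 < n) (h : ∀ x ∈ W, x ^ n = x) :
    q ^ Module.finrank F W ≤ n := by
  classical
  have : Finite W := Module.finite_of_finite F
  have := Fintype.ofFinite W
  rw [← Nat.card_eq_fintype_card, ← Module.natCard_eq_pow_finrank, Nat.card_eq_fintype_card,
    ← Finset.card_univ, ← Finset.card_map (Function.Embedding.subtype _)]
  exact Finset.card_le_of_forall_pow_eq_self hn _ (by simpa using h)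

/-- The fixed points of `x ↦ x ^ q ^ 2` form an `F`-subspace with at most `q ^ 2` elements. -/
lemma exists_relation_of_pow_card_sq_eq_self {s p : K} (hs : s ^ q ^ 2 = s)
    (hp : p ^ q ^ 2 = p) :
    ∃ u v w : F, (u, v, w) ≠ 0 ∧ algebraMap F K u + algebraMap F K v * s +
      algebraMap F K w * p = 0 := by
  have hdep : ¬ LinearIndependent F ![1, s, p] := by
    intro hli
    have hfix : ∀ x ∈ Submodule.span F (Set.range ![1, s, p]), x ^ q ^ 2 = x := by
      intro x hx
      rw [← frobeniusAlgHom_pow_apply]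
      refine (Submodule.span_le (p := Subalgebra.toSubmodule
        (AlgHom.equalizer (FiniteField.frobeniusAlgHom F K ^ 2) 1))).2 ?_ hx
      rintro _ ⟨i, rfl⟩
      fin_cases i <;> simp [frobeniusAlgHom_pow_apply, hs, hp]
    have hq : 1 < q := Fintype.one_lt_card
    have := FiniteDimensional.span_of_finite F (Set.finite_range ![1, s, p])
    have := Submodule.card_pow_finrank_le_of_forall_pow_eq_self _ (by nlinarith) hfix
    rw [finrank_span_eq_card hli, Fintype.card_fin] at this
    exact absurd this (not_le.2 (Nat.pow_lt_pow_right hq (by norm_num)))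
  obtain ⟨g, hg, i, hi⟩ := Fintype.not_linearIndependent_iff.1 hdep
  refine ⟨g 0, g 1, g 2, fun h0 => hi ?_, ?_⟩
  · simp only [Prod.mk_eq_zero] at h0
    fin_cases i <;> simp [h0]
  · simpa [Fin.sum_univ_three, Algebra.smul_def] using hg


lemma notMem_range_algebraMap_of_pow_ne_self {x : K} {n : ℕ} (hx : x ^ q ^ n ≠ x) :
    x ∉ Set.range (algebraMap F K) := by
  rintro ⟨c, rfl⟩
  exact hx (by rw [← map_pow, FiniteField.pow_card_pow])

theorem exists_involution_swapping_conjugates [CharP F 2] {α : K} (hα : α ^ q ^ 4 = α)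
    (hgen : α ^ q ^ 2 ≠ α) :
    ∃ M : GL (Fin 2) F,
      mobius (GeneralLinearGroup.map (algebraMap F K) M) (pt α) = pt (α ^ q ^ 2) ∧
      mobius (GeneralLinearGroup.map (algebraMap F K) M) (pt (α ^ q ^ 2)) = pt α ∧
      mobius (GeneralLinearGroup.map (algebraMap F K) M) (pt (α ^ q)) = pt (α ^ q ^ 3) ∧
      mobius (GeneralLinearGroup.map (algebraMap F K) M) (pt (α ^ q ^ 3)) = pt (α ^ q) ∧
      (∀ p, mobius (GeneralLinearGroup.map (algebraMap F K) M)
        (mobius (GeneralLinearGroup.map (algebraMap F K) M) p) = p) ∧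
      ¬ IsScalarMat M ∧
      (∀ M' : GL (Fin 2) F,
        mobius (GeneralLinearGroup.map (algebraMap F K) M') (pt α) = pt (α ^ q ^ 2) →
        mobius (GeneralLinearGroup.map (algebraMap F K) M') (pt (α ^ q ^ 2)) = pt α →
        mobius (GeneralLinearGroup.map (algebraMap F K) M') (pt (α ^ q)) = pt (α ^ q ^ 3) →
        mobius (GeneralLinearGroup.map (algebraMap F K) M') (pt (α ^ q ^ 3)) = pt (α ^ q) →
        ∀ p, mobius (GeneralLinearGroup.map (algebraMap F K) M') p =
          mobius (GeneralLinearGroup.map (algebraMap F K) M) p) := by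
  have hβ : (α ^ q ^ 2) ^ q ^ 2 = α := by rw [← pow_mul, ← pow_add]; exact hα
  have hβq : (α ^ q ^ 2) ^ q = α ^ q ^ 3 := by rw [← pow_mul, ← pow_succ]
  have hinj : Function.Injective (· ^ q : K → K) :=
    (FiniteField.frobeniusAlgHom F K).toRingHom.injective
  have hα1 : α ^ q ≠ α := fun h => hgen (by rw [sq, pow_mul, h, h])
  have hα12 : α ^ q ≠ α ^ q ^ 2 := fun h =>
    hα1 (hinj (show α ^ q = (α ^ q) ^ q by rwa [sq, pow_mul] at h)).symm
  obtain ⟨u, v, w, huvw, hrel⟩ := exists_relation_of_pow_card_sq_eq_self (F := F)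
    (s := α + α ^ q ^ 2) (p := α * α ^ q ^ 2)
    (by rw [← frobeniusAlgHom_pow_apply, map_add, frobeniusAlgHom_pow_apply,
      frobeniusAlgHom_pow_apply, hβ, add_comm]) (by rw [mul_pow, hβ, mul_comm])
  have hrelq := congrArg (FiniteField.frobeniusAlgHom F K) hrel
  simp only [map_add, map_mul, AlgHom.commutes, map_zero, FiniteField.frobeniusAlgHom_apply,
    hβq] at hrelq
  obtain ⟨M, hM, hns, hswap⟩ := exists_swap_of_relation
    (notMem_range_algebraMap_of_pow_ne_self hgen)
    (notMem_range_algebraMap_of_pow_ne_self (by rw [hβ]; exact hgen.symm))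
    (Ne.symm hgen) huvw hrel
  have hswap' : ∀ x y, mobius (GeneralLinearGroup.map (algebraMap F K) M) (pt x) = pt y →
      mobius (GeneralLinearGroup.map (algebraMap F K) M) (pt y) = pt x := fun x y h => by
    rw [hswap] at h ⊢
    linear_combination h
  have h1 := (hswap α (α ^ q ^ 2)).2 (by linear_combination hrel)
  have h3 := (hswap (α ^ q) (α ^ q ^ 3)).2 (by linear_combination hrelq)
  refine ⟨M, h1, hswap' _ _ h1, h3, hswap' _ _ h3, fun p => ?_, hns,
    fun M' h1' h2' h3' _ => mobius_eq_of_agree_on_three hα1.symm hα12 (Ne.symm hgen)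
      (h1'.trans h1.symm) (h3'.trans h3.symm) (h2'.trans (hswap' _ _ h1).symm)⟩
  rw [← mobius_mul, ← map_mul]
  exact mobius_of_isScalarMat ((isScalarMat_mul_self_iff_of_char_two.2 hM).map _) p

end FiniteField

section Involutions

variable {F : Type*} [Field F]

lemma exists_conj_eq_of_mul_eq (M : GL (Fin 2) F) {P X : Matrix (Fin 2) (Fin 2) F}
    (hP : P.det ≠ 0) (h : (M : Matrix (Fin 2) (Fin 2) F) * P = P * X) :
    ∃ Φ : GL (Fin 2) F, ((Φ * M * Φ⁻¹ : GL (Fin 2) F) : Matrix (Fin 2) (Fin 2) F) = X := by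
  set G := GeneralLinearGroup.mkOfDetNeZero P hP
  have hG : (G : Matrix (Fin 2) (Fin 2) F) = P := rfl
  refine ⟨G⁻¹, ?_⟩
  rw [inv_inv, Units.val_mul, Units.val_mul, hG, mul_assoc, h, ← mul_assoc, ← hG,
    ← Units.val_mul, inv_mul_cancel, Units.val_one, one_mul]

/-- `N = [[a + e, b], [c, a + e]]` squares to zero; `P` has columns `N v` and `e v` for a vector
`v` outside `ker N`. -/
lemma exists_mul_eq_mul_jordan_of_char_two [CharP F 2] {a b c e : F} (hbc : (b, c) ≠ 0) (he : e ≠ 0)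
    (he2 : e * e = a * a + b * c) :
    ∃ P : Matrix (Fin 2) (Fin 2) F, P.det ≠ 0 ∧ !![a, b; c, a] * P = P * !![e, e; 0, e] := by
  have h2 := CharTwo.two_eq_zero (R := F)
  by_cases hc : c = 0
  · have hb : b ≠ 0 := fun hb => hbc (by simp [hb, hc])
    have hea : e = a := by
      have : (e + a) * (e + a) = 0 := by
        linear_combination he2 + b * hc + (e * a + a * a) * h2
      linear_combination mul_self_eq_zero.1 this - a * h2
    refine ⟨!![b, 0; 0, e], by simp [hb, he], ?_⟩
    simp [hc, hea, mul_comm]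
  · refine ⟨!![a + e, e; c, 0], by simp [he, hc], ?_⟩
    rw [mul_fin_two, mul_fin_two, of.injective.eq_iff]
    simp only [vecCons_inj, and_true]
    refine ⟨⟨?_, ?_⟩, ?_, ?_⟩
    · linear_combination -he2
    · linear_combination -(e * e) * h2
    · linear_combination a * c * h2
    · ring

theorem exists_conj_eq_smul_unipotent [CharP F 2] [PerfectRing F 2] {M : GL (Fin 2) F}
    (hns : ¬ IsScalarMat M) (hsq : IsScalarMat (M * M)) :
    ∃ Φ : GL (Fin 2) F, ∃ c : Fˣ,
      ((Φ * M * Φ⁻¹ : GL (Fin 2) F) : Matrix (Fin 2) (Fin 2) F) = (c : F) • !![1, 1; 0, 1] := by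
  have hd := isScalarMat_mul_self_iff_of_char_two.1 hsq
  have hbc : (M 0 1, M 1 0) ≠ 0 := fun h =>
    hns (isScalarMat_iff.2 ⟨(Prod.mk_eq_zero.1 h).1, (Prod.mk_eq_zero.1 h).2, hd⟩)
  obtain ⟨e, he⟩ := surjective_frobenius F 2 (M : Matrix (Fin 2) (Fin 2) F).det
  rw [frobenius_def] at he
  have he0 : e ≠ 0 := by
    rintro rfl
    exact (isUnits_det_units M).ne_zero (by rw [← he, zero_pow two_ne_zero])
  have he2 : e * e = M 0 0 * M 0 0 + M 0 1 * M 1 0 := by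
    rw [← sq, he, det_fin_two, ← hd]
    linear_combination -(M 0 1 * M 1 0) * CharTwo.two_eq_zero (R := F)
  obtain ⟨P, hP, hMP⟩ := exists_mul_eq_mul_jordan_of_char_two hbc he0 he2
  obtain ⟨Φ, hΦ⟩ := exists_conj_eq_of_mul_eq M hP (by rwa [eta_fin_two (M : Matrix _ _ F), ← hd])
  exact ⟨Φ, Units.mk0 e he0, by simp [hΦ]⟩

end Involutions

/-- Let `q` be a power of `2`, `F` the field with `q` elements, `K = F_{q⁴}`, and `α ∈ K`
a generator of `K` over `F`.  Then: (1) there is a (unique, as an element of `PGL₂(F)`)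
involution in `PGL₂(F)` swapping `α` with `α^{q²}` and `α^q` with `α^{q³}`; and
(2) every involution in `PGL₂(F)` (a nonidentity class `M` with `M²` scalar) is conjugate
in `PGL₂(F)` to the class of the matrix `[[1,1],[0,1]]`. -/
theorem char_two_involutions
    {F : Type*} [Field F] [Fintype F] (q : ℕ) (hq : Fintype.card F = q)
    (h2 : CharP F 2)
    {K : Type*} [Field K] [Fintype K] [Algebra F K]
    (hK : Fintype.card K = q ^ 4)
    (α : K) (hgen : α ^ q ^ 2 ≠ α) :
    (∃ M : GL (Fin 2) F,
      mobius (Matrix.GeneralLinearGroup.map (algebraMap F K) M) (pt α) = pt (α ^ q ^ 2) ∧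
      mobius (Matrix.GeneralLinearGroup.map (algebraMap F K) M) (pt (α ^ q ^ 2)) = pt α ∧
      mobius (Matrix.GeneralLinearGroup.map (algebraMap F K) M) (pt (α ^ q)) = pt (α ^ q ^ 3) ∧
      mobius (Matrix.GeneralLinearGroup.map (algebraMap F K) M) (pt (α ^ q ^ 3)) = pt (α ^ q) ∧
      (∀ p, mobius (Matrix.GeneralLinearGroup.map (algebraMap F K) M)
        (mobius (Matrix.GeneralLinearGroup.map (algebraMap F K) M) p) = p) ∧
      ¬ IsScalarMat M ∧
      (∀ M' : GL (Fin 2) F,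
        mobius (Matrix.GeneralLinearGroup.map (algebraMap F K) M') (pt α) = pt (α ^ q ^ 2) →
        mobius (Matrix.GeneralLinearGroup.map (algebraMap F K) M') (pt (α ^ q ^ 2)) = pt α →
        mobius (Matrix.GeneralLinearGroup.map (algebraMap F K) M') (pt (α ^ q)) = pt (α ^ q ^ 3) →
        mobius (Matrix.GeneralLinearGroup.map (algebraMap F K) M') (pt (α ^ q ^ 3)) = pt (α ^ q) →
        ∀ p, mobius (Matrix.GeneralLinearGroup.map (algebraMap F K) M') p =
          mobius (Matrix.GeneralLinearGroup.map (algebraMap F K) M) p)) ∧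
    (∀ M : GL (Fin 2) F, ¬ IsScalarMat M → IsScalarMat (M * M) →
      ∃ Φ : GL (Fin 2) F, ∃ c : Fˣ,
        ((Φ * M * Φ⁻¹ : GL (Fin 2) F) : Matrix (Fin 2) (Fin 2) F) =
          (c : F) • !![1, 1; 0, 1]) := by
  subst hq
  have := h2
  have hα : α ^ Fintype.card F ^ 4 = α := by rw [← hK]; exact FiniteField.pow_card α
  exact ⟨exists_involution_swapping_conjugates hα hgen,
    fun M hns hsq => exists_conj_eq_smul_unipotent hns hsq⟩
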